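/- arXiv:2102.02333 — 2 statements merged into one kernel-verified Lean document; each statement's English description precedes it below -/
import Mathlib

section
/- Given an assemblage σ with full-rank marginal ρ_σ = Σ_i λ^i |v^i⟩⟨v^i|, the pure state |ψ⟩ = Σ_i √λ^i |v^i⟩_A|v^i⟩_B together with the operators M_{n|r} := ρ_σ^{-1/2} σ_{n|r}^T ρ_σ^{-1/2} (transpose in the eigenbasis {|v^i⟩}) forms a valid POVM realization of σ: each M_{n|r} is positive semidefinite, Σ_n M_{n|r} = I for each r, and Tr_A[(M_{n|r}⊗I)|ψ⟩⟨ψ|] = σ_{n|r}. -/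
open Finset Matrix Kronecker
open scoped ComplexOrder

/-- Partial trace over the first (Alice) subsystem. -/
noncomputable def ptraceA {A B : Type*} [Fintype A]
    (M : Matrix (A × B) (A × B) ℂ) : Matrix B B ℂ :=
  fun b b' => ∑ a : A, M (a, b) (a, b')

/-- The assemblage element Tr_A[(M ⊗ I_B) ρ]. -/
noncomputable def assemble {A B : Type*} [Fintype A] [Fintype B] [DecidableEq A] [DecidableEq B]
    (M : Matrix A A ℂ) (ρ : Matrix (A × B) (A × B) ℂ) : Matrix B B ℂ :=
  ptraceA ((M ⊗ₖ (1 : Matrix B B ℂ)) * ρ)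

lemma assemble_vec {d : ℕ} (M A : Matrix (Fin d) (Fin d) ℂ) :
    assemble M (Matrix.vecMulVec (fun p => A p.1 p.2) (star (fun p : Fin d × Fin d => A p.1 p.2)))
      = (Aᴴ * M * A)ᵀ := by
  ext b b'
  simp only [assemble, ptraceA, Matrix.mul_apply, Matrix.kroneckerMap_apply,
    Matrix.vecMulVec_apply, Matrix.transpose_apply, Matrix.conjTranspose_apply,
    Fintype.sum_prod_type, Matrix.one_apply, Pi.star_apply, RCLike.star_def,
    mul_ite, mul_zero, ite_mul, zero_mul, Finset.sum_ite_eq, Finset.mem_univ, if_true]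
  rw [Finset.sum_comm]
  refine Finset.sum_congr rfl fun a _ => ?_
  rw [Finset.sum_mul]
  refine Finset.sum_congr rfl fun c _ => ?_
  ring

/-- the canonical realization of an assemblage with full-rank marginal:
the purification |ψ⟩ = Σ_i √λ^i |v^i⟩|v^i⟩ together with
M_{n|r} = ρ^{-1/2} σ_{n|r}^T ρ^{-1/2} (transpose in the eigenbasis {|v^i⟩}) is a valid
POVM realization of σ. Here the eigenbasis is encoded by the unitary `U` whose columns
are the eigenvectors `|v^i⟩`, so ρ_σ = U D U† with D = diagonal (λ), λ^i > 0. -/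
theorem canonical_realization {N R : Type*} [Fintype N] [Fintype R] {d : ℕ}
    (σ : N → R → Matrix (Fin d) (Fin d) ℂ)
    (ρ : Matrix (Fin d) (Fin d) ℂ)
    (hpos : ∀ n r, (σ n r).PosSemidef)
    (hns : ∀ r, ∑ n : N, σ n r = ρ)
    (htr : ρ.trace = 1)
    (lam : Fin d → ℝ) (hlam : ∀ i, 0 < lam i)
    (U : Matrix (Fin d) (Fin d) ℂ) (hU : U ∈ Matrix.unitaryGroup (Fin d) ℂ)
    (hspec : ρ = U * Matrix.diagonal (fun i => (lam i : ℂ)) * Uᴴ) :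
    -- ρ^{-1/2} in terms of the spectral data
    let rinvsqrt : Matrix (Fin d) (Fin d) ℂ :=
      U * Matrix.diagonal (fun i => ((Real.sqrt (lam i))⁻¹ : ℂ)) * Uᴴ
    -- transpose taken with respect to the eigenbasis {|v^i⟩}
    let Tb : Matrix (Fin d) (Fin d) ℂ → Matrix (Fin d) (Fin d) ℂ :=
      fun X => U * (Uᴴ * X * U)ᵀ * Uᴴ
    let M : N → R → Matrix (Fin d) (Fin d) ℂ :=
      fun n r => rinvsqrt * Tb (σ n r) * rinvsqrt
    -- the purification |ψ⟩ = Σ_k √λ^k |v^k⟩ ⊗ |v^k⟩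
    let ψ : Fin d × Fin d → ℂ :=
      fun p => ∑ k : Fin d, (Real.sqrt (lam k) : ℂ) * U p.1 k * U p.2 k
    (∀ n r, (M n r).PosSemidef) ∧
    (∀ r, ∑ n : N, M n r = 1) ∧
    (∀ n r, assemble (M n r) (Matrix.vecMulVec ψ (star ψ)) = σ n r) := by
  intro rinvsqrt Tb M ψ
  have hU1 : Uᴴ * U = 1 := by
    have := (Matrix.mem_unitaryGroup_iff'.mp hU)
    simpa [Matrix.star_eq_conjTranspose] using this
  have hU2 : U * Uᴴ = 1 := by
    have := (Matrix.mem_unitaryGroup_iff.mp hU)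
    simpa [Matrix.star_eq_conjTranspose] using this
  -- diagonal pieces
  set e : Fin d → ℂ := fun i => ((Real.sqrt (lam i))⁻¹ : ℂ) with he
  set c : Fin d → ℂ := fun i => ((Real.sqrt (lam i)) : ℂ) with hc
  have hsne : ∀ i, (Real.sqrt (lam i) : ℂ) ≠ 0 := fun i => by
    exact_mod_cast Complex.ofReal_ne_zero.mpr (ne_of_gt (Real.sqrt_pos.mpr (hlam i)))
  have hce : ∀ i, c i * e i = 1 := fun i => mul_inv_cancel₀ (hsne i)
  have hec : ∀ i, e i * c i = 1 := fun i => inv_mul_cancel₀ (hsne i)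
  set E : Matrix (Fin d) (Fin d) ℂ := Matrix.diagonal e with hE
  set Ds : Matrix (Fin d) (Fin d) ℂ := Matrix.diagonal c with hDs
  have hede : ∀ i, e i * (lam i : ℂ) * e i = 1 := by
    intro i
    have hl : (Real.sqrt (lam i) : ℂ) * (Real.sqrt (lam i) : ℂ) = (lam i : ℂ) := by
      rw [← Complex.ofReal_mul, Real.mul_self_sqrt (le_of_lt (hlam i))]
    rw [he, ← hl]
    simp only
    field_simp
    exact div_self (hsne i)
  have hEDE : E * Matrix.diagonal (fun i => (lam i : ℂ)) * E = 1 := by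
    rw [hE, Matrix.diagonal_mul_diagonal, Matrix.diagonal_mul_diagonal, ← Matrix.diagonal_one]
    exact congrArg Matrix.diagonal (funext fun i => hede i)
  have hDsE : Ds * E = 1 := by
    rw [hDs, hE, Matrix.diagonal_mul_diagonal, ← Matrix.diagonal_one]
    exact congrArg Matrix.diagonal (funext fun i => hce i)
  have hEDs : E * Ds = 1 := by
    rw [hDs, hE, Matrix.diagonal_mul_diagonal, ← Matrix.diagonal_one]
    exact congrArg Matrix.diagonal (funext fun i => hec i)
  -- collapse lemmas
  have cU1 : ∀ X : Matrix (Fin d) (Fin d) ℂ, Uᴴ * (U * X) = X := fun X => by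
    rw [← Matrix.mul_assoc, hU1, Matrix.one_mul]
  have cU2 : ∀ X : Matrix (Fin d) (Fin d) ℂ, U * (Uᴴ * X) = X := fun X => by
    rw [← Matrix.mul_assoc, hU2, Matrix.one_mul]
  have cDE : ∀ X : Matrix (Fin d) (Fin d) ℂ, Ds * (E * X) = X := fun X => by
    rw [← Matrix.mul_assoc, hDsE, Matrix.one_mul]
  have cED : ∀ X : Matrix (Fin d) (Fin d) ℂ, E * (Ds * X) = X := fun X => by
    rw [← Matrix.mul_assoc, hEDs, Matrix.one_mul]
  have hrE : rinvsqrt = U * E * Uᴴ := rfl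
  -- Hermitian-ness of rinvsqrt
  have hse : star e = e := by
    funext i
    simp [he, Pi.star_apply, ← Complex.ofReal_inv, Complex.conj_ofReal]
  have hsc : star c = c := by
    funext i
    simp [hc, Pi.star_apply, Complex.conj_ofReal]
  have hEH : Eᴴ = E := by
    rw [hE, Matrix.diagonal_conjTranspose, hse]
  have hrsH : rinvsqrtᴴ = rinvsqrt := by
    rw [hrE, Matrix.conjTranspose_mul, Matrix.conjTranspose_mul, hEH,
      Matrix.conjTranspose_conjTranspose, Matrix.mul_assoc]
  refine ⟨?_, ?_, ?_⟩
  · -- positive semidefiniteness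
    intro n r
    have h1 : (Uᴴ * σ n r * U).PosSemidef := (hpos n r).conjTranspose_mul_mul_same U
    have h2 : ((Uᴴ * σ n r * U)ᵀ).PosSemidef := h1.transpose
    have h3 : (Tb (σ n r)).PosSemidef := by
      have := h2.mul_mul_conjTranspose_same U
      simpa [Tb] using this
    have h4 := h3.mul_mul_conjTranspose_same rinvsqrt
    rw [hrsH] at h4
    exact h4
  · -- normalization
    intro r
    have h1 : ∑ n, M n r = rinvsqrt * Tb ρ * rinvsqrt := by
      rw [← hns r]
      simp only [M, Tb, Matrix.mul_sum, Matrix.sum_mul, Matrix.transpose_sum]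
    rw [h1, hspec]
    show U * E * Uᴴ * (U * (Uᴴ * (U * Matrix.diagonal (fun i => (lam i : ℂ)) * Uᴴ) * U)ᵀ * Uᴴ) *
        (U * E * Uᴴ) = 1
    simp only [Matrix.mul_assoc, cU1, cU2]
    rw [hU1, Matrix.mul_one, Matrix.diagonal_transpose]
    rw [show E * (Matrix.diagonal (fun i => (lam i : ℂ)) * (E * Uᴴ)) =
        (E * Matrix.diagonal (fun i => (lam i : ℂ)) * E) * Uᴴ by
          simp only [Matrix.mul_assoc]]
    rw [hEDE, Matrix.one_mul, hU2]
  · -- recovering the assemblage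
    intro n r
    set A : Matrix (Fin d) (Fin d) ℂ := U * Ds * Uᵀ with hA
    have hψ : ψ = fun p : Fin d × Fin d => A p.1 p.2 := by
      funext p
      simp only [ψ, hA, Matrix.mul_apply, Matrix.mul_diagonal, Matrix.transpose_apply,
        Matrix.mul_diagonal]
      rw [show (∑ j, (∑ k, U p.1 k * Matrix.diagonal c k j) * U p.2 j) =
        ∑ j, U p.1 j * c j * U p.2 j from by
          refine Finset.sum_congr rfl fun j _ => ?_
          congr 1
          rw [Finset.sum_eq_single j (fun k _ hk => by
            rw [Matrix.diagonal_apply_ne _ hk, mul_zero]) (by simp)]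
          simp [Matrix.diagonal_apply_eq]]
      exact Finset.sum_congr rfl fun j _ => by rw [hc]; ring
    rw [hψ, assemble_vec]
    -- compute Aᴴ
    have hAH : Aᴴ = Uᵀᴴ * (Ds * Uᴴ) := by
      rw [hA, Matrix.conjTranspose_mul, Matrix.conjTranspose_mul]
      congr 1
      rw [hDs, Matrix.diagonal_conjTranspose, hsc]
    have hM2 : M n r = U * (E * ((Uᴴ * σ n r * U)ᵀ * E)) * Uᴴ := by
      show rinvsqrt * Tb (σ n r) * rinvsqrt = _
      rw [hrE]
      simp only [Tb, Matrix.mul_assoc, cU1]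
    have hAMA : Aᴴ * M n r * A = Uᵀᴴ * ((Uᴴ * σ n r * U)ᵀ * Uᵀ) := by
      rw [hAH, hM2, hA]
      simp only [Matrix.mul_assoc, cU1, cU2, cDE, cED]
    rw [hAMA]
    have hVT : (Uᵀᴴ)ᵀ = Uᴴ := by
      ext i j; simp [Matrix.conjTranspose_apply, Matrix.transpose_apply]
    rw [Matrix.transpose_mul, Matrix.transpose_mul, hVT, Matrix.transpose_transpose,
      Matrix.transpose_transpose]
    simp only [Matrix.mul_assoc, cU2]
    rw [hU2, Matrix.mul_one]
end

section
/- For a qubit assemblage with σ_{0|0} = (1/2)|0⟩⟨0| and σ_{1|0} = (1/2)|1⟩⟨1| (so x⃗ = 0, t₀ = 0), parametrized by (t₁, x₁, y₁, z₁) for the second input via σ₁ = σ_{0|1} − σ_{1|1} = (1/2)(t₁ I + x₁σ_x + y₁σ_y + z₁σ_z) with t₁ = 0: it can be written as an equal mixture of two extremal assemblages with parameters (±T, ±T z₁', x₁', y₁', z₁') satisfying the extremality conditions (x₁')²+(y₁')² = (1−(z₁')²)(1−T²) if and only if (x₁² + y₁²)/(1 − T²) + z₁² ≤ 1 (for 0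 ≤ T < 1). In particular the largest such T is T_σ = √((1 − x₁² − y₁² − z₁²)/(1 − z₁²)) when z₁² < 1. -/
open Finset

/-- Weighted Jensen for squares. -/
lemma weighted_jensen_sq {m : ℕ} (w a : Fin m → ℝ) (hw : ∀ i, 0 ≤ w i)
    (hwsum : ∑ i, w i = 1) : (∑ i, w i * a i)^2 ≤ ∑ i, w i * (a i)^2 := by
  have h := Finset.sum_mul_sq_le_sq_mul_sq Finset.univ
    (fun i => Real.sqrt (w i)) (fun i => Real.sqrt (w i) * a i)
  have e1 : ∀ i : Fin m, Real.sqrt (w i) * (Real.sqrt (w i) * a i) = w i * a i := by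
    intro i
    rw [← mul_assoc, Real.mul_self_sqrt (hw i)]
  have e2 : ∀ i : Fin m, (Real.sqrt (w i))^2 = w i := fun i => Real.sq_sqrt (hw i)
  have e3 : ∀ i : Fin m, (Real.sqrt (w i) * a i)^2 = w i * (a i)^2 := by
    intro i
    rw [mul_pow, e2]
  simp only [e1, e2, e3] at h
  calc (∑ i, w i * a i)^2 ≤ (∑ i, w i) * ∑ i, w i * (a i)^2 := h
    _ = ∑ i, w i * (a i)^2 := by rw [hwsum, one_mul]

/-- parameter level: a qubit assemblage in the restricted family
(σ_{0|0} = |0⟩⟨0|/2, σ_{1|0} = |1⟩⟨1|/2, t₁ = 0, second-input four-vector (0,x₁,y₁,z₁))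
can be decomposed into a convex mixture of extremal assemblages, all with |t₀| = T and
parameters (t₀ z', x', y', z') satisfying the extremality condition
(x')² + (y')² = (1 − (z')²)(1 − T²), reproducing σ (i.e. averaging to t₀ = 0, t₁ = 0,
(x₁,y₁,z₁)), if and only if (x₁² + y₁²)/(1 − T²) + z₁² ≤ 1.  Moreover the largest such T
is T_σ = √((1 − x₁² − y₁² − z₁²)/(1 − z₁²)) when z₁² < 1. -/
theorem equal_value_decomposition_iff (x₁ y₁ z₁ : ℝ)
    (hball : x₁^2 + y₁^2 + z₁^2 ≤ 1) :
    (∀ T : ℝ, 0 ≤ T → T < 1 →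
      ((∃ (m : ℕ) (w t₀ xv yv zv : Fin m → ℝ),
          (∀ i, 0 ≤ w i) ∧ (∑ i, w i = 1) ∧
          (∀ i, |t₀ i| = T) ∧
          (∀ i, (xv i)^2 + (yv i)^2 = (1 - (zv i)^2) * (1 - T^2)) ∧
          (∑ i, w i * t₀ i = 0) ∧
          (∑ i, w i * (t₀ i * zv i) = 0) ∧
          (∑ i, w i * xv i = x₁) ∧ (∑ i, w i * yv i = y₁) ∧ (∑ i, w i * zv i = z₁)) ↔
        (x₁^2 + y₁^2) / (1 - T^2) + z₁^2 ≤ 1)) ∧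
    (z₁^2 < 1 →
      (let Tσ := Real.sqrt ((1 - x₁^2 - y₁^2 - z₁^2) / (1 - z₁^2))
       (Tσ < 1 → (x₁^2 + y₁^2) / (1 - Tσ^2) + z₁^2 ≤ 1) ∧
       ∀ T : ℝ, 0 ≤ T → T < 1 →
         (x₁^2 + y₁^2) / (1 - T^2) + z₁^2 ≤ 1 → T ≤ Tσ)) := by
  constructor
  · intro T hT0 hT1
    have hT2 : (0:ℝ) < 1 - T^2 := by nlinarith
    constructor
    · rintro ⟨m, w, t₀, xv, yv, zv, hw, hwsum, _, hext, _, _, hx, hy, hz⟩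
      have hx2 : x₁^2 ≤ ∑ i, w i * (xv i)^2 := hx ▸ weighted_jensen_sq w xv hw hwsum
      have hy2 : y₁^2 ≤ ∑ i, w i * (yv i)^2 := hy ▸ weighted_jensen_sq w yv hw hwsum
      have hz2 : z₁^2 ≤ ∑ i, w i * (zv i)^2 := hz ▸ weighted_jensen_sq w zv hw hwsum
      have key : (∑ i, w i * (xv i)^2) + (∑ i, w i * (yv i)^2)
          + (1 - T^2) * (∑ i, w i * (zv i)^2) = 1 - T^2 := by
        have : ∀ i : Fin m, w i * (xv i)^2 + w i * (yv i)^2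
            + (1 - T^2) * (w i * (zv i)^2) = w i * (1 - T^2) := by
          intro i
          linear_combination w i * hext i
        have hsum := Finset.sum_congr rfl (fun i (_ : i ∈ Finset.univ) => this i)
        rw [Finset.sum_add_distrib, Finset.sum_add_distrib, ← Finset.mul_sum,
          ← Finset.sum_mul, hwsum, one_mul] at hsum
        linarith [hsum]
      have hmain : x₁^2 + y₁^2 + (1 - T^2) * z₁^2 ≤ 1 - T^2 := by nlinarith
      have hd : (x₁^2 + y₁^2) / (1 - T^2) * (1 - T^2) = x₁^2 + y₁^2 :=
        div_mul_cancel₀ _ (ne_of_gt hT2)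
      nlinarith [hd]
    · intro hle
      have hxy : x₁^2 + y₁^2 ≤ (1 - z₁^2) * (1 - T^2) := by
        have h1 : (x₁^2 + y₁^2) / (1 - T^2) ≤ 1 - z₁^2 := by linarith
        calc x₁^2 + y₁^2 = (x₁^2 + y₁^2) / (1 - T^2) * (1 - T^2) :=
              (div_mul_cancel₀ _ (ne_of_gt hT2)).symm
          _ ≤ (1 - z₁^2) * (1 - T^2) := by
              exact mul_le_mul_of_nonneg_right h1 (le_of_lt hT2)
      obtain ⟨u, v, huv1, huv2⟩ : ∃ u v : ℝ, u^2 + v^2 = 1 ∧ u * x₁ + v * y₁ = 0 := by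
        rcases eq_or_lt_of_le (by positivity : (0:ℝ) ≤ x₁^2 + y₁^2) with h | h
        · have hx0 : x₁ = 0 := by nlinarith [sq_nonneg x₁, sq_nonneg y₁]
          have hy0 : y₁ = 0 := by nlinarith [sq_nonneg x₁, sq_nonneg y₁]
          exact ⟨1, 0, by norm_num, by rw [hx0, hy0]; ring⟩
        · set n := Real.sqrt (x₁^2 + y₁^2) with hn
          have hnpos : 0 < n := Real.sqrt_pos.mpr h
          have hn2 : n^2 = x₁^2 + y₁^2 := Real.sq_sqrt (le_of_lt h)
          refine ⟨-y₁ / n, x₁ / n, ?_, ?_⟩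
          · field_simp
            linarith [hn2]
          · field_simp
            ring
      set s := Real.sqrt ((1 - z₁^2) * (1 - T^2) - (x₁^2 + y₁^2)) with hsdef
      have hs2 : s^2 = (1 - z₁^2) * (1 - T^2) - (x₁^2 + y₁^2) :=
        Real.sq_sqrt (by linarith)
      refine ⟨2, ![1/2, 1/2], ![T, -T], ![x₁ + s*u, x₁ - s*u], ![y₁ + s*v, y₁ - s*v],
        ![z₁, z₁], ?_, ?_, ?_, ?_, ?_, ?_, ?_, ?_, ?_⟩
      · intro i; fin_cases i <;> norm_num
      · simp [Fin.sum_univ_two]; norm_num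
      · intro i; fin_cases i <;> simp [abs_of_nonneg hT0]
      · intro i
        fin_cases i
        · show (x₁ + s*u)^2 + (y₁ + s*v)^2 = (1 - z₁^2) * (1 - T^2)
          linear_combination hs2 + s^2 * huv1 + 2*s*huv2
        · show (x₁ - s*u)^2 + (y₁ - s*v)^2 = (1 - z₁^2) * (1 - T^2)
          linear_combination hs2 + s^2 * huv1 - 2*s*huv2
      · simp [Fin.sum_univ_two]; try ring
      · simp [Fin.sum_univ_two]; try ring
      · simp [Fin.sum_univ_two]; try ring
      · simp [Fin.sum_univ_two]; try ring
      · simp [Fin.sum_univ_two]; try ring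
  · intro hz1
    intro Tσ
    have hzpos : (0:ℝ) < 1 - z₁^2 := by linarith
    have hnum : (0:ℝ) ≤ 1 - x₁^2 - y₁^2 - z₁^2 := by linarith
    have hfrac : (0:ℝ) ≤ (1 - x₁^2 - y₁^2 - z₁^2) / (1 - z₁^2) :=
      div_nonneg hnum (le_of_lt hzpos)
    have hTσ2 : Tσ^2 = (1 - x₁^2 - y₁^2 - z₁^2) / (1 - z₁^2) := Real.sq_sqrt hfrac
    have hTσ0 : 0 ≤ Tσ := Real.sqrt_nonneg _
    have hTσ2' : Tσ^2 * (1 - z₁^2) = 1 - x₁^2 - y₁^2 - z₁^2 := by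
      rw [hTσ2]; field_simp
    constructor
    · intro hTσlt
      have hT2 : (0:ℝ) < 1 - Tσ^2 := by nlinarith
      have hxyz : x₁^2 + y₁^2 = (1 - z₁^2) * (1 - Tσ^2) := by nlinarith
      have hd : (x₁^2 + y₁^2) / (1 - Tσ^2) = 1 - z₁^2 := by
        rw [hxyz]; field_simp
      rw [hd]; linarith
    · intro T hT0 hT1 hle
      have hT2 : (0:ℝ) < 1 - T^2 := by nlinarith
      have hxy : x₁^2 + y₁^2 ≤ (1 - z₁^2) * (1 - T^2) := by
        have h1 : (x₁^2 + y₁^2) / (1 - T^2) ≤ 1 - z₁^2 := by linarith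
        calc x₁^2 + y₁^2 = (x₁^2 + y₁^2) / (1 - T^2) * (1 - T^2) :=
              (div_mul_cancel₀ _ (ne_of_gt hT2)).symm
          _ ≤ (1 - z₁^2) * (1 - T^2) := mul_le_mul_of_nonneg_right h1 (le_of_lt hT2)
      have hTle : T^2 ≤ Tσ^2 := by
        have : T^2 * (1 - z₁^2) ≤ 1 - x₁^2 - y₁^2 - z₁^2 := by nlinarith
        rw [hTσ2]
        rw [le_div_iff₀ hzpos]
        linarith
      calc T = Real.sqrt (T^2) := (Real.sqrt_sq hT0).symm
        _ ≤ Real.sqrt (Tσ^2) := Real.sqrt_le_sqrt (by linarith)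
        _ = Tσ := Real.sqrt_sq hTσ0
end
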